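/- Let f, g : F_q^d → F_q be linear bipermutive local rules given by coefficient vectors a, b ∈ F_q^d with a_1, a_d, b_1, b_d nonzero, with associated polynomials P_f(X) = a_1 + a_2 X + ... + a_d X^{d-1} and P_g(X) = b_1 + b_2 X + ... + b_d X^{d-1} in F_q[X]. Then the map H : F_q^{2n} → F_q^{2n} (n = d−1) defined by H(x‖y) = F(x‖y)‖G(x‖y) is bijective if and only if gcd(P_f, P_g) = 1. -/

import Mathlib

/-!
Reading `s` as a row vector, `H s = s ᵥ* Syl(P_g, P_f)`: the `i`-th output of the `f`-block pairs
the window `s_i, …, s_{i+n}` with the coefficients of `P_f`, and that is column `i` of the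
Sylvester matrix. Hence `H` is bijective iff the Sylvester determinant, the resultant, is nonzero,
and over a field the resultant of two polynomials, not both zero, vanishes iff they have a
nontrivial common factor.
-/

open Polynomial Matrix

theorem Matrix.vecMul_bijective_iff_isUnit {ι K : Type*} [Fintype ι] [DecidableEq ι] [Field K]
    {A : Matrix ι ι K} : Function.Bijective A.vecMul ↔ IsUnit A :=
  ⟨fun h ↦ vecMul_injective_iff_isUnit.mp h.1,
    fun h ↦ ⟨vecMul_injective_iff_isUnit.mpr h, vecMul_surjective_iff_isUnit.mpr h⟩⟩

namespace Polynomial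

section Semiring

variable {R : Type*} [Semiring R] {n : ℕ}

theorem coeff_sum_fin_C_mul_X_pow (c : Fin n → R) (i : Fin n) :
    (∑ j : Fin n, C (c j) * X ^ (j : ℕ)).coeff i = c i := by
  simp [finsetSum_coeff, Fin.val_inj]

theorem natDegree_sum_fin_C_mul_X_pow {c : Fin (n + 1) → R} (hc : c (Fin.last n) ≠ 0) :
    (∑ j : Fin (n + 1), C (c j) * X ^ (j : ℕ)).natDegree = n := by
  refine natDegree_eq_of_le_of_coeff_ne_zero
    (natDegree_sum_le_of_forall_le _ _ fun j _ ↦ (natDegree_C_mul_X_pow_le _ _).trans j.is_le) ?_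
  simpa using (coeff_sum_fin_C_mul_X_pow c (Fin.last n)).trans_ne hc

end Semiring

variable {R : Type*} [CommSemiring R] {m n : ℕ}

theorem vecMul_sylvester_castAdd (f g : R[X]) (s : Fin (m + n) → R) (i : Fin m) :
    (s ᵥ* sylvester f g m n) (Fin.castAdd n i) =
      ∑ j : Fin (n + 1), g.coeff j * s ⟨i + j, by omega⟩ := by
  refine (Fintype.sum_of_injective (fun j : Fin (n + 1) ↦ (⟨i + j, by omega⟩ : Fin (m + n)))
    (fun j k h ↦ by simpa [Fin.ext_iff] using h) _ _ (fun k hk ↦ ?_) fun j ↦ ?_).symm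
  · simp only [sylvester, Matrix.of_apply, Fin.addCases_left, Set.mem_Icc]
    rw [if_neg, mul_zero]
    rintro ⟨h₁, h₂⟩
    exact hk ⟨⟨k - i, by omega⟩, Fin.ext (by simp; omega)⟩
  · simp [sylvester, mul_comm, Nat.le_of_lt_succ j.isLt]

theorem vecMul_sylvester_natAdd (f g : R[X]) (s : Fin (m + n) → R) (i : Fin n) :
    (s ᵥ* sylvester f g m n) (Fin.natAdd m i) =
      ∑ j : Fin (m + 1), f.coeff j * s ⟨i + j, by omega⟩ := by
  refine (Fintype.sum_of_injective (fun j : Fin (m + 1) ↦ (⟨i + j, by omega⟩ : Fin (m + n)))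
    (fun j k h ↦ by simpa [Fin.ext_iff] using h) _ _ (fun k hk ↦ ?_) fun j ↦ ?_).symm
  · simp only [sylvester, Matrix.of_apply, Fin.addCases_right, Set.mem_Icc]
    rw [if_neg, mul_zero]
    rintro ⟨h₁, h₂⟩
    exact hk ⟨⟨k - i, by omega⟩, Fin.ext (by simp; omega)⟩
  · simp [sylvester, mul_comm, Nat.le_of_lt_succ j.isLt]

end Polynomial

open Polynomial in
/-- For linear bipermutive rules `f, g` of diameter `d = m + 2`
with coefficient vectors `a, b` (nonzero first and last entries) and
associated polynomials `P_f, P_g` of degree `n = d - 1 = m + 1`, the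
superposition map `H(x‖y) = F(x‖y) ‖ G(x‖y)` of the two no-boundary CA is
bijective iff `P_f` and `P_g` are coprime. -/
theorem stmt4 (K : Type*) [Field K] (m : ℕ)
    (a b : Fin (m + 2) → K)
    (had : a (Fin.last (m + 1)) ≠ 0)
    (hbd : b (Fin.last (m + 1)) ≠ 0)
    (Pf Pg : K[X])
    (hPf : Pf = ∑ i : Fin (m + 2), C (a i) * X ^ (i : ℕ))
    (hPg : Pg = ∑ i : Fin (m + 2), C (b i) * X ^ (i : ℕ))
    (H : (Fin ((m + 1) + (m + 1)) → K) → (Fin ((m + 1) + (m + 1)) → K))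
    (hH : ∀ s : Fin ((m + 1) + (m + 1)) → K,
      H s = Fin.append
        (fun i : Fin (m + 1) => ∑ j : Fin (m + 2),
          a j * s ⟨i.val + j.val, by have := i.isLt; have := j.isLt; omega⟩)
        (fun i : Fin (m + 1) => ∑ j : Fin (m + 2),
          b j * s ⟨i.val + j.val, by have := i.isLt; have := j.isLt; omega⟩)) :
    Function.Bijective H ↔ IsCoprime Pf Pg := by
  have hf : Pf.natDegree = m + 1 := hPf ▸ natDegree_sum_fin_C_mul_X_pow had
  have hg : Pg.natDegree = m + 1 := hPg ▸ natDegree_sum_fin_C_mul_X_pow hbd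
  have hH_sylvester : H = (sylvester Pg Pf (m + 1) (m + 1)).vecMul := by
    funext s r
    refine Fin.addCases (fun i ↦ ?_) (fun i ↦ ?_) r
    · rw [hH, Fin.append_left, vecMul_sylvester_castAdd, hPf]
      simp only [coeff_sum_fin_C_mul_X_pow]
    · rw [hH, Fin.append_right, vecMul_sylvester_natAdd, hPg]
      simp only [coeff_sum_fin_C_mul_X_pow]
  have hdet : (sylvester Pg Pf (m + 1) (m + 1)).det = resultant Pg Pf := by
    rw [resultant, hf, hg]
  have hPg0 : Pg ≠ 0 := fun h ↦ by simp [h] at hg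
  rw [hH_sylvester, vecMul_bijective_iff_isUnit, isUnit_iff_isUnit_det, isUnit_iff_ne_zero, hdet,
    Ne, resultant_eq_zero_iff, isCoprime_comm]
  simp [hPg0]
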